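/- For every e ∈ (0,1) and every φ ∈ (0, π/2), the incomplete elliptic integrals satisfy the strict inequality E(φ,e)·K(e) > F(φ,e)·E(π/2,e). (Equivalently, the function g(z) = 𝓔(zK(e),e) − z𝓔(K(e),e) built from the Jacobi epsilon function is strictly positive for z ∈ (0,1).) -/

import Mathlib

/-!
Write `w τ = 1 - e² sin² τ`, so that `E(φ,e) = ∫₀^φ w · (1/√w)` and `F(φ,e) = ∫₀^φ 1/√w`: the
ratio `E(φ,e) / F(φ,e)` is the mean of `w` over `[0, φ]` for the positive weight `1/√w`. Since `w`
decreases on `[0, π/2]`, splitting `[0, π/2]` at `φ` and comparing `w` with `w φ` on each piece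
shows that this mean over `[0, φ]` strictly exceeds the mean over `[0, π/2]`, which is
`E(π/2,e) / K(e)`.
-/

open Real

/-- Incomplete elliptic integral of the first kind `F(φ,e)`. -/
noncomputable def ellF (φ e : ℝ) : ℝ :=
  ∫ τ in (0:ℝ)..φ, 1 / Real.sqrt (1 - e ^ 2 * Real.sin τ ^ 2)

/-- Incomplete elliptic integral of the second kind `E(φ,e)`. -/
noncomputable def ellE (φ e : ℝ) : ℝ :=
  ∫ τ in (0:ℝ)..φ, Real.sqrt (1 - e ^ 2 * Real.sin τ ^ 2)

/-- Complete elliptic integral of the first kind `K(e)`. -/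
noncomputable def ellK (e : ℝ) : ℝ := ellF (Real.pi / 2) e

open Set MeasureTheory intervalIntegral

theorem integral_mul_integral_lt_of_antitoneOn {f g : ℝ → ℝ} {a x b : ℝ} (hax : a < x)
    (hxb : x < b) (hf : ContinuousOn f (Icc a b)) (hg : ContinuousOn g (Icc a b))
    (hf_pos : ∀ t ∈ Icc a b, 0 < f t) (hg_anti : AntitoneOn g (Icc a b)) (hgx : g x < g a) :
    (∫ t in a..x, f t) * (∫ t in a..b, g t * f t) <
      (∫ t in a..x, g t * f t) * ∫ t in a..b, f t := by
  have hleft : Icc a x ⊆ Icc a b := Icc_subset_Icc_right hxb.le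
  have hright : Icc x b ⊆ Icc a b := Icc_subset_Icc_left hax.le
  have hx : x ∈ Icc a b := ⟨hax.le, hxb.le⟩
  have hgf : ContinuousOn (fun t => g t * f t) (Icc a b) := hg.mul hf
  have hcf : ContinuousOn (fun t => g x * f t) (Icc a b) := continuousOn_const.mul hf
  have hf_left := (hf.mono hleft).intervalIntegrable_of_Icc (μ := volume) hax.le
  have hf_right := (hf.mono hright).intervalIntegrable_of_Icc (μ := volume) hxb.le
  have hgf_left := (hgf.mono hleft).intervalIntegrable_of_Icc (μ := volume) hax.le
  have hgf_right := (hgf.mono hright).intervalIntegrable_of_Icc (μ := volume) hxb.le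
  have hA : 0 < ∫ t in a..x, f t := intervalIntegral_pos_of_pos_on hf_left
    (fun t ht => hf_pos t (hleft (Ioo_subset_Icc_self ht))) hax
  have hB : 0 < ∫ t in x..b, f t := intervalIntegral_pos_of_pos_on hf_right
    (fun t ht => hf_pos t (hright (Ioo_subset_Icc_self ht))) hxb
  have h_above : g x * ∫ t in a..x, f t < ∫ t in a..x, g t * f t := by
    rw [← intervalIntegral.integral_const_mul]
    refine integral_lt_integral_of_continuousOn_of_le_of_exists_lt hax (hcf.mono hleft)
      (hgf.mono hleft) (fun t ht => ?_) ⟨a, left_mem_Icc.2 hax.le, ?_⟩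
    · have ht' : t ∈ Icc a b := hleft (Ioc_subset_Icc_self ht)
      exact mul_le_mul_of_nonneg_right (hg_anti ht' hx ht.2) (hf_pos t ht').le
    · exact mul_lt_mul_of_pos_right hgx (hf_pos a (left_mem_Icc.2 (hax.trans hxb).le))
  have h_below : ∫ t in x..b, g t * f t ≤ g x * ∫ t in x..b, f t := by
    rw [← intervalIntegral.integral_const_mul]
    refine integral_mono_on hxb.le hgf_right (hf_right.const_mul _) (fun t ht => ?_)
    exact mul_le_mul_of_nonneg_right (hg_anti hx (hright ht) ht.1) (hf_pos t (hright ht)).le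
  rw [← integral_add_adjacent_intervals hf_left hf_right,
    ← integral_add_adjacent_intervals hgf_left hgf_right]
  have key : (∫ t in a..x, f t) * ∫ t in x..b, g t * f t <
      (∫ t in a..x, g t * f t) * ∫ t in x..b, f t :=
    calc (∫ t in a..x, f t) * ∫ t in x..b, g t * f t
        ≤ (∫ t in a..x, f t) * (g x * ∫ t in x..b, f t) :=
          mul_le_mul_of_nonneg_left h_below hA.le
      _ = (g x * ∫ t in a..x, f t) * ∫ t in x..b, f t := by ring
      _ < (∫ t in a..x, g t * f t) * ∫ t in x..b, f t := mul_lt_mul_of_pos_right h_above hB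
  linarith

theorem one_sub_sq_mul_sin_sq_pos {e : ℝ} (he : e ^ 2 < 1) (τ : ℝ) :
    0 < 1 - e ^ 2 * sin τ ^ 2 := by
  nlinarith [sin_sq_le_one τ, sq_nonneg e]

theorem antitoneOn_one_sub_sq_mul_sin_sq (e : ℝ) :
    AntitoneOn (fun τ => 1 - e ^ 2 * sin τ ^ 2) (Icc 0 (π / 2)) := by
  intro σ hσ τ hτ hστ
  have hsin : sin σ ≤ sin τ :=
    sin_le_sin_of_le_of_le_pi_div_two (by linarith [pi_pos, hσ.1]) hτ.2 hστ
  have hsin_nonneg : 0 ≤ sin σ :=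
    sin_nonneg_of_nonneg_of_le_pi hσ.1 (by linarith [pi_pos, hσ.2])
  have hsq : sin σ ^ 2 ≤ sin τ ^ 2 := pow_le_pow_left₀ hsin_nonneg hsin 2
  linarith [mul_le_mul_of_nonneg_left hsq (sq_nonneg e)]

theorem ellE_eq_integral_mul (φ e : ℝ) :
    ellE φ e =
      ∫ τ in (0:ℝ)..φ, (1 - e ^ 2 * sin τ ^ 2) * (1 / √(1 - e ^ 2 * sin τ ^ 2)) := by
  simp only [ellE, mul_one_div, div_sqrt]

/-- the strict inequality `E(φ,e)·K(e) > F(φ,e)·E(π/2,e)` for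
`e ∈ (0,1)` and `φ ∈ (0,π/2)`. -/
theorem elliptic_integral_inequality (e φ : ℝ)
    (he0 : 0 < e) (he1 : e < 1) (hφ0 : 0 < φ) (hφ : φ < Real.pi / 2) :
    ellE φ e * ellK e > ellF φ e * ellE (Real.pi / 2) e := by
  have hw_pos := one_sub_sq_mul_sin_sq_pos (e := e) (by nlinarith)
  have hw_cont : Continuous fun τ => 1 - e ^ 2 * sin τ ^ 2 := by fun_prop
  have hf_cont : Continuous fun τ => 1 / √(1 - e ^ 2 * sin τ ^ 2) :=
    continuous_const.div hw_cont.sqrt fun τ => (sqrt_pos.2 (hw_pos τ)).ne'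
  have hw_lt : 1 - e ^ 2 * sin φ ^ 2 < 1 - e ^ 2 * sin 0 ^ 2 := by
    have : 0 < sin φ := sin_pos_of_pos_of_lt_pi hφ0 (by linarith [pi_pos])
    simp only [sin_zero]
    nlinarith [mul_pos (pow_pos he0 2) (pow_pos this 2)]
  have key := integral_mul_integral_lt_of_antitoneOn hφ0 hφ hf_cont.continuousOn
    hw_cont.continuousOn (fun τ _ => one_div_pos.2 (sqrt_pos.2 (hw_pos τ)))
    (antitoneOn_one_sub_sq_mul_sin_sq e) hw_lt
  rw [ellK, ellE_eq_integral_mul, ellE_eq_integral_mul]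
  exact key
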